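/- Let R be a commutative ring, let λ ∈ R, let A and C be λ-circulant n×n matrices over R, and let J be the back-diagonal permutation matrix of order n. Then A·(C·J) = (C·J)·Aᵀ; equivalently, A·J·Cᵀ = C·J·Aᵀ. -/

import Mathlib

open Matrix Polynomial

/-- The `l`-circulant matrix with first row `a`: each row is the `l`-cyclic
shift of the previous one (last entry wraps to the front multiplied by `l`). -/
def lamCirc {R : Type*} [CommRing R] (n : ℕ) (l : R) (a : Fin n → R) :
    Matrix (Fin n) (Fin n) R :=
  fun i j =>
    if h : (i : ℕ) ≤ (j : ℕ) then a ⟨(j : ℕ) - (i : ℕ), by have := j.isLt; omega⟩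
    else l * a ⟨n + (j : ℕ) - (i : ℕ), by have := i.isLt; have := j.isLt; omega⟩

/-- `A` is an `l`-circulant matrix. -/
def IsLamCirc {R : Type*} [CommRing R] (n : ℕ) (l : R) (A : Matrix (Fin n) (Fin n) R) : Prop :=
  ∃ a : Fin n → R, A = lamCirc n l a

/-- The back-diagonal permutation matrix `J` with `J_{i, n-i+1} = 1` (1-indexed). -/
def backDiag {R : Type*} [CommRing R] (n : ℕ) : Matrix (Fin n) (Fin n) R :=
  fun i j => if (i : ℕ) + (j : ℕ) + 1 = n then 1 else 0

/-!
Entry `(i, j)` of a λ-circulant matrix is `λ ^ w * a (j - i)`, where `w ∈ {0, 1}` records whether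
the cyclic step from `i` to `j` wraps around. In a product of two of them the summation index `k`
contributes the offsets `k - i` and `j - k` and a power of `λ` depending only on their sum, so
the involution `k ↦ i + j - k` shows that λ-circulant matrices commute. They are also
persymmetric, `Aᵀ = J A J`, and `J² = 1`; hence `A (C J) = C A J = C J (J A J) = C J Aᵀ` and
`A J Cᵀ = A J J C J = A C J = C J Aᵀ`.
-/

theorem Nat.div_add_mod_add_div (x e n : ℕ) :
    x / n + (x % n + e) / n = (x + e) / n := by
  rcases Nat.eq_zero_or_pos n with rfl | hn
  · simp
  conv_rhs => rw [← Nat.mod_add_div x n, Nat.add_right_comm, Nat.add_mul_div_left _ _ hn]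
  exact Nat.add_comm _ _

section

variable {R : Type*} [CommRing R] {n : ℕ}

-- `i + (j - i)` is `j` or `n + j`, so the exponent is `1` exactly below the diagonal.
theorem lamCirc_apply (l : R) (a : Fin n → R) (i j : Fin n) :
    lamCirc n l a i j = l ^ (((i : ℕ) + (j - i : Fin n)) / n) * a (j - i) := by
  have hi := i.isLt
  have hj := j.isLt
  unfold lamCirc
  split_ifs with h
  · have hsub : ((j - i : Fin n) : ℕ) = j - i := Fin.coe_sub_iff_le.mpr h
    rw [hsub, Nat.add_sub_cancel' h, Nat.div_eq_of_lt hj, pow_zero, one_mul]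
    exact congrArg a (Fin.ext hsub.symm)
  · have hsub : ((j - i : Fin n) : ℕ) = n + j - i := by
      rw [Fin.val_sub, Nat.mod_eq_of_lt (by omega)]
      omega
    have hexp : ((i : ℕ) + (n + j - i)) / n = 1 := by
      rw [Nat.add_sub_cancel' (by omega), Nat.add_div_left _ (by omega), Nat.div_eq_of_lt hj]
    rw [hsub, hexp, pow_one]
    exact congrArg (l * a ·) (Fin.ext hsub.symm)

theorem lamCirc_mul_apply (l : R) (a c : Fin n → R) (i j : Fin n) :
    (lamCirc n l a * lamCirc n l c) i j =
      ∑ k, l ^ (((i : ℕ) + (k - i : Fin n) + (j - k : Fin n)) / n) * (a (k - i) * c (j - k)) := by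
  have : NeZero n := NeZero.of_pos i.pos
  rw [mul_apply]
  refine Finset.sum_congr rfl fun k _ => ?_
  have hk : ((i : ℕ) + (k - i : Fin n)) % n = k := by
    rw [← Fin.val_add, add_sub_cancel]
  rw [lamCirc_apply, lamCirc_apply, ← Nat.div_add_mod_add_div ((i : ℕ) + (k - i : Fin n)), hk,
    pow_add]
  ring

theorem lamCirc_mul_comm (l : R) (a c : Fin n → R) :
    lamCirc n l a * lamCirc n l c = lamCirc n l c * lamCirc n l a := by
  ext i j
  have : NeZero n := NeZero.of_pos i.pos
  rw [lamCirc_mul_apply, lamCirc_mul_apply]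
  refine Fintype.sum_equiv (Equiv.subLeft (i + j)) _ _ fun k => ?_
  simp only [Equiv.subLeft_apply]
  rw [show i + j - k - i = j - k by abel, show j - (i + j - k) = k - i by abel,
    Nat.add_right_comm, mul_comm (a _)]

theorem transpose_lamCirc (l : R) (a : Fin n → R) :
    (lamCirc n l a)ᵀ = (lamCirc n l a).submatrix Fin.rev Fin.rev := by
  ext i j
  have hi := i.isLt
  have hj := j.isLt
  simp only [transpose_apply, submatrix_apply, lamCirc, Fin.val_rev]
  split_ifs
  · exact congrArg a (Fin.ext (by simp only; omega))
  · omega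
  · omega
  · exact congrArg (l * a ·) (Fin.ext (by simp only; omega))

theorem backDiag_eq_submatrix_one :
    backDiag n = (1 : Matrix (Fin n) (Fin n) R).submatrix id Fin.rev := by
  ext i j
  simp only [backDiag, submatrix_apply, id, one_apply, Fin.ext_iff, Fin.val_rev]
  have := j.isLt
  exact if_congr (by omega) rfl rfl

theorem mul_backDiag (M : Matrix (Fin n) (Fin n) R) : M * backDiag n = M.submatrix id Fin.rev := by
  rw [backDiag_eq_submatrix_one]
  exact mul_submatrix_one (Equiv.refl _) Fin.rev M

theorem backDiag_mul (M : Matrix (Fin n) (Fin n) R) : backDiag n * M = M.submatrix Fin.rev id := by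
  rw [backDiag_eq_submatrix_one]
  exact one_submatrix_mul id Fin.revPerm M

theorem backDiag_mul_backDiag : backDiag n * backDiag n = (1 : Matrix (Fin n) (Fin n) R) := by
  rw [mul_backDiag, backDiag_eq_submatrix_one, submatrix_submatrix, Fin.rev_involutive.comp_self,
    Function.comp_id, submatrix_id_id]

theorem transpose_lamCirc_eq_backDiag_mul_mul (l : R) (a : Fin n → R) :
    (lamCirc n l a)ᵀ = backDiag n * lamCirc n l a * backDiag n := by
  rw [transpose_lamCirc, mul_backDiag, backDiag_mul, submatrix_submatrix]
  rfl

end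

/-- For λ-circulant A, C: A·(C·J) = (C·J)·Aᵀ, equivalently A·J·Cᵀ = C·J·Aᵀ. -/
theorem lamCirc_mul_backDiag_comm {R : Type*} [CommRing R] {n : ℕ} (l : R)
    (A C : Matrix (Fin n) (Fin n) R)
    (hA : IsLamCirc n l A) (hC : IsLamCirc n l C) :
    A * (C * backDiag n) = (C * backDiag n) * Aᵀ ∧
      A * backDiag n * Cᵀ = C * backDiag n * Aᵀ := by
  obtain ⟨a, rfl⟩ := hA
  obtain ⟨c, rfl⟩ := hC
  rw [transpose_lamCirc_eq_backDiag_mul_mul l a, transpose_lamCirc_eq_backDiag_mul_mul l c]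
  have hAC := lamCirc_mul_comm l a c
  set A := lamCirc n l a
  set C := lamCirc n l c
  set J : Matrix (Fin n) (Fin n) R := backDiag n
  have hJJ (M : Matrix (Fin n) (Fin n) R) : J * (J * M) = M := by
    rw [← Matrix.mul_assoc, backDiag_mul_backDiag, Matrix.one_mul]
  constructor
  · calc A * (C * J) = C * A * J := by rw [← Matrix.mul_assoc, hAC]
      _ = C * J * (J * A * J) := by simp only [Matrix.mul_assoc, hJJ]
  · calc A * J * (J * C * J) = A * C * J := by simp only [Matrix.mul_assoc, hJJ]
      _ = C * A * J := by rw [hAC]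
      _ = C * J * (J * A * J) := by simp only [Matrix.mul_assoc, hJJ]
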